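/- For a simple, smooth, closed, positively oriented plane curve γ = (x, y) : [0,1] → ℝ², the area of the enclosed region is −∮ y dx = −∫₀¹ y(s) x'(s) ds; applied to the rational quadratic parameterization of the unit circle (the four quarter-circle Bézier arcs), the sum of −∫₀¹ yᵢ(s) xᵢ'(s) ds over the four arcs equals π. -/

import Mathlib

open intervalIntegral

/-- Denominator of the rational quadratic quarter-circle parameterization. -/
noncomputable def circW (s : ℝ) : ℝ :=
  1 + (Real.sqrt 2 - 2) * s + (2 - Real.sqrt 2) * s ^ 2

/-- First coordinate of the quarter-circle arc. -/
noncomputable def circX (s : ℝ) : ℝ :=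
  (1 + (Real.sqrt 2 - 2) * s + (1 - Real.sqrt 2) * s ^ 2) / circW s

/-- Second coordinate of the quarter-circle arc. -/
noncomputable def circY (s : ℝ) : ℝ :=
  (Real.sqrt 2 * s + (1 - Real.sqrt 2) * s ^ 2) / circW s

/-!
Rotating the arc by quarter turns permutes `±x, ±y`, so the four integrals add up to
`2 ∫₀¹ (x y' - y x')`. For the arc `(p / w, q / w)` the Wronskian `x y' - y x'` equals
`(p q' - q p') / w² = √2 / w`, and this is the derivative of the polar angle
`θ(s) = 2 arctan ((√2 + 1) s / (2 + √2 - s))` of the arc point. Hence each quarter arc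
sweeps `θ 1 - θ 0 = 2 arctan 1 = π / 2`, and the total is `π`.
-/

open Real

theorem sum_rotations_neg_integral_mul_deriv_eq (x y : ℝ → ℝ) (a b : ℝ)
    (hx : IntervalIntegrable (fun s => x s * deriv y s) MeasureTheory.volume a b)
    (hy : IntervalIntegrable (fun s => y s * deriv x s) MeasureTheory.volume a b) :
    (-∫ s in a..b, y s * deriv x s) +
        (-∫ s in a..b, x s * deriv (fun t => -y t) s) +
        (-∫ s in a..b, (-y s) * deriv (fun t => -x t) s) +
        (-∫ s in a..b, (-x s) * deriv y s) =
      2 * ∫ s in a..b, (x s * deriv y s - y s * deriv x s) := by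
  simp only [deriv.fun_neg, mul_neg, neg_mul, integral_neg, neg_neg, integral_sub hx hy]
  ring

theorem mul_deriv_div_sub_mul_deriv_div {𝕜 : Type*} [NontriviallyNormedField 𝕜]
    {p q w : 𝕜 → 𝕜} {p' q' w' s : 𝕜} (hp : HasDerivAt p p' s) (hq : HasDerivAt q q' s)
    (hw : HasDerivAt w w' s) (hws : w s ≠ 0) :
    p s / w s * deriv (fun t => q t / w t) s - q s / w s * deriv (fun t => p t / w t) s =
      (p s * q' - q s * p') / w s ^ 2 := by
  rw [(hq.fun_div hw hws).deriv, (hp.fun_div hw hws).deriv]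
  field_simp
  ring

theorem sq_sqrt_two : √2 ^ 2 = 2 := sq_sqrt zero_le_two

theorem circW_pos (s : ℝ) : 0 < circW s := by
  have hw : circW s = ((2 - √2) * (2 * s - 1) ^ 2 + (2 + √2)) / 4 := by unfold circW; ring
  have hc : 0 < 2 - √2 := by linarith [sqrt_two_lt_three_halves]
  rw [hw]
  exact div_pos (add_pos_of_nonneg_of_pos (by positivity) (by positivity)) four_pos

theorem circW_ne_zero (s : ℝ) : circW s ≠ 0 := (circW_pos s).ne'

theorem contDiff_circW : ContDiff ℝ 1 circW := by unfold circW; fun_prop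

theorem contDiff_circX : ContDiff ℝ 1 circX :=
  (by fun_prop : ContDiff ℝ 1 fun s : ℝ => _ ).div contDiff_circW circW_ne_zero

theorem contDiff_circY : ContDiff ℝ 1 circY :=
  (by fun_prop : ContDiff ℝ 1 fun s : ℝ => _ ).div contDiff_circW circW_ne_zero

theorem hasDerivAt_circW (s : ℝ) : HasDerivAt circW (√2 - 2 + 2 * (2 - √2) * s) s :=
  ((((hasDerivAt_id' s).const_mul (√2 - 2)).const_add 1).add
    ((hasDerivAt_pow 2 s).const_mul (2 - √2))).congr_deriv (by ring)

theorem circX_mul_deriv_circY_sub_circY_mul_deriv_circX (s : ℝ) :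
    circX s * deriv circY s - circY s * deriv circX s = √2 / circW s := by
  have hp : HasDerivAt (fun s => 1 + (√2 - 2) * s + (1 - √2) * s ^ 2)
      (√2 - 2 + 2 * (1 - √2) * s) s :=
    ((((hasDerivAt_id' s).const_mul (√2 - 2)).const_add 1).add
      ((hasDerivAt_pow 2 s).const_mul (1 - √2))).congr_deriv (by ring)
  have hq : HasDerivAt (fun s => √2 * s + (1 - √2) * s ^ 2) (√2 + 2 * (1 - √2) * s) s :=
    (((hasDerivAt_id' s).const_mul √2).add
      ((hasDerivAt_pow 2 s).const_mul (1 - √2))).congr_deriv (by ring)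
  refine (mul_deriv_div_sub_mul_deriv_div hp hq (hasDerivAt_circW s) (circW_ne_zero s)).trans ?_
  have := circW_ne_zero s
  field_simp
  unfold circW
  linear_combination (s ^ 2 - s) * sq_sqrt_two

noncomputable def circAngle (s : ℝ) : ℝ :=
  2 * arctan ((√2 + 1) * s / (2 + √2 - s))

theorem hasDerivAt_circAngle {s : ℝ} (hs : s ≠ 2 + √2) :
    HasDerivAt circAngle (√2 / circW s) s := by
  have hden : 2 + √2 - s ≠ 0 := sub_ne_zero.2 hs.symm
  have hu := ((hasDerivAt_id' s).const_mul (√2 + 1)).fun_div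
    ((hasDerivAt_id' s).const_sub (2 + √2)) hden
  refine (hu.arctan.const_mul 2).congr_deriv ?_
  have := circW_ne_zero s
  field_simp
  unfold circW
  linear_combination (-2 + 4 * s - 4 * s ^ 2 - √2 + 2 * √2 * s - 3 * √2 * s ^ 2) * sq_sqrt_two

theorem integral_sqrt_two_div_circW : ∫ s in (0 : ℝ)..1, √2 / circW s = π / 2 := by
  have hs : ∀ s ∈ Set.uIcc (0 : ℝ) 1, s ≠ 2 + √2 := by
    intro s hs
    rw [Set.uIcc_of_le zero_le_one] at hs
    exact ne_of_lt (by linarith [hs.2, sqrt_nonneg 2])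
  rw [integral_eq_sub_of_hasDerivAt (fun s h => hasDerivAt_circAngle (hs s h))
    ((continuous_const.div contDiff_circW.continuous circW_ne_zero).intervalIntegrable 0 1)]
  have h1 : (√2 + 1) * 1 / (2 + √2 - 1) = 1 := by
    rw [show (2 : ℝ) + √2 - 1 = √2 + 1 by ring, mul_one, div_self (by positivity)]
  rw [circAngle, circAngle, h1, mul_zero, zero_div, arctan_zero, arctan_one]
  ring

/-- The area enclosed by a positively oriented closed curve is −∮ y dx; applied to
the four rational quadratic Bézier quarter-circle arcs (the arc (circX, circY) and
its rotations by 90°, 180° and 270°), the sum of −∫₀¹ yᵢ(s) xᵢ'(s) ds equals π. -/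
theorem unit_circle_area_from_bezier_arcs :
    (-∫ s in (0:ℝ)..1, circY s * deriv circX s) +
      (-∫ s in (0:ℝ)..1, circX s * deriv (fun t => -circY t) s) +
      (-∫ s in (0:ℝ)..1, (-circY s) * deriv (fun t => -circX t) s) +
      (-∫ s in (0:ℝ)..1, (-circX s) * deriv circY s) = Real.pi := by
  have hx := contDiff_circX.continuous.mul (contDiff_circY.continuous_deriv le_rfl)
  have hy := contDiff_circY.continuous.mul (contDiff_circX.continuous_deriv le_rfl)
  rw [sum_rotations_neg_integral_mul_deriv_eq circX circY 0 1
    (hx.intervalIntegrable 0 1) (hy.intervalIntegrable 0 1)]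
  simp only [circX_mul_deriv_circY_sub_circY_mul_deriv_circX, integral_sqrt_two_div_circW]
  ring
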